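/- arXiv:2004.14733 — 4 statements merged into one kernel-verified Lean document; each statement's English description precedes it below -/
import Mathlib

section
/- Let (E_t)_{t=1}^T be independent and identically distributed Bernoulli random variables with success probability p ∈ [0,1], let Δ ∈ ℕ, and let t_1 < t_2 < ... < t_N be deterministic time indices in {1,...,T−Δ} satisfying t_{j+1} − t_j > Δ for all j = 1,...,N−1. Then the number of trigger coincidences K = Σ_{j=1}^N max_{δ=0,...,Δ} E_{t_j+δ} has the binomial distribution with parameters N and π = 1 − (1−p)^{Δ+1}; that is, P(K = k) = C(N,k) · π^k · (1−π)^{N−k} for every 0 ≤ k ≤ N. -/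
/-!
The `j`-th coincidence indicator is the maximum of `E` over the window `ts j, …, ts j + Δ`. It
vanishes iff all `Δ + 1` variables of the window vanish, which by independence has probability
`(1 - p) ^ (Δ + 1)`. The gap condition makes the windows pairwise disjoint, so each indicator is
independent of the sum of the earlier ones, and Pascal's rule gives the binomial law by induction
on the number of windows.
-/

open MeasureTheory ProbabilityTheory Finset
open scoped ENNReal

theorem Finset.measurable_sup_apply {α δ ι : Type*} [MeasurableSpace α] [SemilatticeSup α]
    [OrderBot α] [MeasurableSup₂ α] [MeasurableSpace δ] {s : Finset ι} {f : ι → δ → α}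
    (hf : ∀ i ∈ s, Measurable (f i)) : Measurable fun x => s.sup fun i => f i x := by
  simp only [← Finset.sup_apply]
  exact Finset.sup_induction measurable_const (fun _ h₁ _ h₂ => h₁.sup h₂) hf

theorem Nat.cast_choose_succ_succ_mul_pow_mul_pow {R : Type*} [CommSemiring R] (n m : ℕ)
    (a b : R) :
    ((n + 1).choose (m + 1) : R) * a ^ (m + 1) * b ^ (n - m) =
      n.choose (m + 1) * a ^ (m + 1) * b ^ (n - (m + 1)) * b +
        n.choose m * a ^ m * b ^ (n - m) * a := by
  rw [Nat.choose_succ_succ']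
  rcases lt_or_ge m n with hmn | hnm
  · obtain ⟨d, rfl⟩ := Nat.exists_eq_add_of_lt hmn
    rw [show m + d + 1 - m = d + 1 by omega, show m + d + 1 - (m + 1) = d by omega]
    push_cast
    ring
  · rw [Nat.choose_eq_zero_of_lt (by omega : n < m + 1)]
    push_cast
    ring

theorem add_lt_of_lt_of_forall_add_lt_succ {ts : ℕ → ℕ} {Δ N : ℕ}
    (hgap : ∀ j, j + 1 < N → ts j + Δ < ts (j + 1)) {i j : ℕ} (hij : i < j) (hjN : j < N) :
    ts i + Δ < ts j := by
  induction j, hij using Nat.le_induction with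
  | base => exact hgap i hjN
  | succ j hij ih =>
    have := ih (by omega)
    have := hgap j hjN
    omega

section

variable {Ω : Type*} [MeasurableSpace Ω] {μ : Measure Ω}

theorem measure_eq_zero_add_measure_eq_one {X : Ω → ℕ} (hX : Measurable X)
    (h01 : ∀ ω, X ω ≤ 1) : μ {ω | X ω = 0} + μ {ω | X ω = 1} = μ Set.univ := by
  have h1 : MeasurableSet {ω | X ω = 1} := hX (measurableSet_singleton 1)
  have hdisj : Disjoint {ω | X ω = 0} {ω | X ω = 1} :=
    Set.disjoint_left.2 fun ω h₀ h₁ => by simp_all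
  rw [← measure_union hdisj h1]
  congr 1
  ext ω
  have := h01 ω
  simp only [Set.mem_union, Set.mem_ofPred_eq, Set.mem_univ, iff_true]
  omega

theorem ProbabilityTheory.IndepFun.measure_add_eq_zero {S X : Ω → ℕ} (h : IndepFun S X μ) :
    μ {ω | S ω + X ω = 0} = μ {ω | S ω = 0} * μ {ω | X ω = 0} := by
  have hset : {ω | S ω + X ω = 0} = {ω | S ω = 0} ∩ {ω | X ω = 0} := by
    ext ω
    simp
  rw [hset]
  exact h.measure_inter_preimage_eq_mul _ _ (measurableSet_singleton 0) (measurableSet_singleton 0)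

theorem ProbabilityTheory.IndepFun.measure_add_eq_succ {S X : Ω → ℕ} (h : IndepFun S X μ)
    (hS : Measurable S) (hX : Measurable X) (h01 : ∀ ω, X ω ≤ 1) (m : ℕ) :
    μ {ω | S ω + X ω = m + 1} =
      μ {ω | S ω = m + 1} * μ {ω | X ω = 0} + μ {ω | S ω = m} * μ {ω | X ω = 1} := by
  have hmul (a b : ℕ) : μ ({ω | S ω = a} ∩ {ω | X ω = b}) = μ {ω | S ω = a} * μ {ω | X ω = b} :=
    h.measure_inter_preimage_eq_mul _ _ (measurableSet_singleton a) (measurableSet_singleton b)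
  have hsplit : {ω | S ω + X ω = m + 1} =
      ({ω | S ω = m + 1} ∩ {ω | X ω = 0}) ∪ ({ω | S ω = m} ∩ {ω | X ω = 1}) := by
    ext ω
    have := h01 ω
    simp only [Set.mem_ofPred_eq, Set.mem_union, Set.mem_inter_iff]
    omega
  have hdisj : Disjoint ({ω | S ω = m + 1} ∩ {ω | X ω = 0}) ({ω | S ω = m} ∩ {ω | X ω = 1}) :=
    Set.disjoint_left.2 fun ω h₀ h₁ => by simp_all
  rw [hsplit, measure_union hdisj ((hS (measurableSet_singleton m)).inter
    (hX (measurableSet_singleton 1))), hmul, hmul]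

theorem measure_sum_range_eq_choose_mul_pow_mul_pow [IsProbabilityMeasure μ] {X : ℕ → Ω → ℕ}
    {π q : ℝ≥0∞} {n : ℕ} (hX : ∀ j, Measurable (X j)) (h01 : ∀ j ω, X j ω ≤ 1)
    (hindep : ∀ j < n, IndepFun (fun ω => ∑ i ∈ range j, X i ω) (X j) μ)
    (hπ : ∀ j < n, μ {ω | X j ω = 1} = π) (hq : ∀ j < n, μ {ω | X j ω = 0} = q) (m : ℕ) :
    μ {ω | ∑ j ∈ range n, X j ω = m} = n.choose m * π ^ m * q ^ (n - m) := by
  induction n generalizing m with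
  | zero => cases m <;> simp
  | succ n ih =>
    have ih' := ih (fun j hj => hindep j (by omega)) (fun j hj => hπ j (by omega))
      (fun j hj => hq j (by omega))
    simp only [sum_range_succ]
    cases m with
    | zero =>
      rw [(hindep n n.lt_succ_self).measure_add_eq_zero, ih', hq n n.lt_succ_self]
      simp [pow_succ]
    | succ m =>
      rw [(hindep n n.lt_succ_self).measure_add_eq_succ (by fun_prop) (hX n) (h01 n), ih', ih',
        hq n n.lt_succ_self, hπ n n.lt_succ_self, Nat.add_sub_add_right,
        Nat.cast_choose_succ_succ_mul_pow_mul_pow]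

theorem ProbabilityTheory.iIndepFun.indepFun_comp_of_dependsOn {ι β γ γ' : Type*}
    [MeasurableSpace β] [Countable β] [MeasurableSingletonClass β] [MeasurableSpace γ]
    [MeasurableSpace γ'] [Nonempty γ] [Nonempty γ'] {f : ι → Ω → β} (hf : iIndepFun f μ)
    (hmeas : ∀ i, Measurable (f i)) {S T : Finset ι} (hST : Disjoint S T)
    {g : (ι → β) → γ} {h : (ι → β) → γ'} (hg : DependsOn g S) (hh : DependsOn h T) :
    IndepFun (fun ω => g (f · ω)) (fun ω => h (f · ω)) μ := by
  obtain ⟨g', rfl⟩ := dependsOn_iff_exists_comp.1 hg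
  obtain ⟨h', rfl⟩ := dependsOn_iff_exists_comp.1 hh
  exact (hf.indepFun_finset S T hST hmeas).comp (measurable_of_countable g')
    (measurable_of_countable h')

theorem ProbabilityTheory.iIndepFun.measure_sup_eq_zero {ι : Type*} {E : ι → Ω → ℕ}
    (h : iIndepFun E μ) (B : Finset ι) :
    μ {ω | B.sup (fun i => E i ω) = 0} = ∏ i ∈ B, μ {ω | E i ω = 0} := by
  have hset : {ω | B.sup (fun i => E i ω) = 0} = ⋂ i ∈ B, {ω | E i ω = 0} := by
    ext ω
    simp only [Set.mem_ofPred_eq, Set.mem_iInter, ← nonpos_iff_eq_zero, Finset.sup_le_iff]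
  rw [hset]
  exact h.meas_biInter fun i _ => ⟨{0}, measurableSet_singleton 0, rfl⟩

theorem measure_sum_sup_eq_choose_mul_pow_mul_pow {ι : Type*} {E : ι → Ω → ℕ}
    (hmeas : ∀ i, Measurable (E i)) (hindep : iIndepFun E μ) (h01 : ∀ i ω, E i ω ≤ 1)
    {r : ℝ≥0∞} (hr : ∀ i, μ {ω | E i ω = 0} = r) {N L : ℕ} (B : ℕ → Finset ι)
    (hcard : ∀ j < N, #(B j) = L) (hdisj : ∀ i j, i < j → j < N → Disjoint (B i) (B j))
    (m : ℕ) :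
    μ {ω | ∑ j ∈ range N, (B j).sup (fun i => E i ω) = m} =
      N.choose m * (1 - r ^ L) ^ m * (r ^ L) ^ (N - m) := by
  classical
  have := hindep.isProbabilityMeasure
  have hX (j : ℕ) : Measurable fun ω => (B j).sup fun i => E i ω :=
    Finset.measurable_sup_apply fun i _ => hmeas i
  have hzero (j : ℕ) (hj : j < N) : μ {ω | (B j).sup (fun i => E i ω) = 0} = r ^ L := by
    rw [hindep.measure_sup_eq_zero, Finset.prod_congr rfl fun i _ => hr i, prod_const, hcard j hj]
  refine measure_sum_range_eq_choose_mul_pow_mul_pow hX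
    (fun j ω => Finset.sup_le fun i _ => h01 i ω) (fun j hj => ?_) (fun j hj => ?_) hzero m
  · refine hindep.indepFun_comp_of_dependsOn hmeas (S := (range j).biUnion B) (T := B j)
      ((disjoint_biUnion_left _ _ _).2 fun i hi => hdisj i j (mem_range.1 hi) hj)
      (g := fun x => ∑ i ∈ range j, (B i).sup x) (h := fun x => (B j).sup x) ?_ ?_
    · exact fun x y hxy => sum_congr rfl fun i hi =>
        sup_congr rfl fun k hk => hxy k (mem_biUnion.2 ⟨i, hi, hk⟩)
    · exact fun x y hxy => sup_congr rfl fun k hk => hxy k hk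
  · rw [← hzero j hj, ← measure_univ (μ := μ), ← measure_eq_zero_add_measure_eq_one (hX j)
      (fun ω => Finset.sup_le fun i _ => h01 i ω), ENNReal.add_sub_cancel_left (measure_ne_top _ _)]

end

theorem trigger_coincidences_binomial_general
    {Ω : Type*} [MeasureSpace Ω] [IsProbabilityMeasure (ℙ : Measure Ω)]
    (E : ℕ → Ω → ℕ) (hmeas : ∀ t, Measurable (E t))
    (hindep : iIndepFun E ℙ)
    (hval : ∀ t ω, E t ω = 0 ∨ E t ω = 1)
    (p : ℝ) (hp0 : 0 ≤ p) (hp1 : p ≤ 1)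
    (hbern : ∀ t, ℙ {ω | E t ω = 1} = ENNReal.ofReal p)
    (Δ N : ℕ) (ts : ℕ → ℕ)
    (hgap : ∀ j, j + 1 < N → ts j + Δ < ts (j + 1))
    (k : ℕ) :
    ℙ {ω | (∑ j ∈ Finset.range N,
        (Finset.range (Δ + 1)).sup (fun δ => E (ts j + δ) ω)) = k}
      = ENNReal.ofReal ((N.choose k : ℝ) * (1 - (1 - p) ^ (Δ + 1)) ^ k
          * (1 - (1 - (1 - p) ^ (Δ + 1))) ^ (N - k)) := by
  have h01 (t : ℕ) (ω : Ω) : E t ω ≤ 1 := by rcases hval t ω with h | h <;> omega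
  have hzero (t : ℕ) : ℙ {ω | E t ω = 0} = ENNReal.ofReal (1 - p) := by
    rw [ENNReal.ofReal_sub _ hp0, ENNReal.ofReal_one, ← hbern t,
      ← measure_univ (μ := (ℙ : Measure Ω)), ← measure_eq_zero_add_measure_eq_one (hmeas t) (h01 t),
      ENNReal.add_sub_cancel_right (measure_ne_top _ _)]
  let B (j : ℕ) : Finset ℕ := (range (Δ + 1)).image (ts j + ·)
  have hcard (j : ℕ) : #(B j) = Δ + 1 := by
    rw [card_image_of_injective _ (add_right_injective _), card_range]
  have hdisj (i j : ℕ) (hij : i < j) (hjN : j < N) : Disjoint (B i) (B j) := by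
    have := add_lt_of_lt_of_forall_add_lt_succ hgap hij hjN
    simp only [B, disjoint_left, mem_image, mem_range]
    omega
  have hsup (j : ℕ) (ω : Ω) :
      (B j).sup (fun t => E t ω) = (range (Δ + 1)).sup fun δ => E (ts j + δ) ω :=
    sup_image _ _ _
  have h1p : 0 ≤ 1 - p := by linarith
  have hpow : 0 ≤ (1 - p) ^ (Δ + 1) := pow_nonneg h1p _
  have hπ : 0 ≤ 1 - (1 - p) ^ (Δ + 1) := sub_nonneg.2 (pow_le_one₀ h1p (by linarith))
  simp only [← hsup]
  rw [measure_sum_sup_eq_choose_mul_pow_mul_pow hmeas hindep h01 hzero B (fun j _ => hcard j) hdisj,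
    sub_sub_cancel, ENNReal.ofReal_mul (mul_nonneg (Nat.cast_nonneg _) (pow_nonneg hπ _)),
    ENNReal.ofReal_mul (Nat.cast_nonneg _), ENNReal.ofReal_natCast, ENNReal.ofReal_pow hπ,
    ENNReal.ofReal_pow hpow, ENNReal.ofReal_sub _ hpow, ENNReal.ofReal_one, ENNReal.ofReal_pow h1p]

/-- For an iid Bernoulli(p) process `E` of length `T` and deterministic event times
`t_1 < ... < t_N` in `{1,...,T-Δ}` separated by more than `Δ` time steps, the number of
trigger coincidences `K = Σ_j max_{δ=0,...,Δ} E_{t_j+δ}` is binomially distributed with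
parameters `N` and `π = 1 - (1-p)^(Δ+1)`. -/
theorem trigger_coincidences_binomial
    {Ω : Type*} [MeasureSpace Ω] [IsProbabilityMeasure (ℙ : Measure Ω)]
    (E : ℕ → Ω → ℕ) (hmeas : ∀ t, Measurable (E t))
    (hindep : iIndepFun E ℙ)
    (hval : ∀ t ω, E t ω = 0 ∨ E t ω = 1)
    (p : ℝ) (hp0 : 0 ≤ p) (hp1 : p ≤ 1)
    (hbern : ∀ t, ℙ {ω | E t ω = 1} = ENNReal.ofReal p)
    (T Δ N : ℕ) (ts : ℕ → ℕ)
    (hrange : ∀ j < N, 1 ≤ ts j ∧ ts j + Δ ≤ T)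
    (hgap : ∀ j, j + 1 < N → ts j + Δ < ts (j + 1))
    (k : ℕ) (hk : k ≤ N) :
    ℙ {ω | (∑ j ∈ Finset.range N,
        (Finset.range (Δ + 1)).sup (fun δ => E (ts j + δ) ω)) = k}
      = ENNReal.ofReal ((N.choose k : ℝ) * (1 - (1 - p) ^ (Δ + 1)) ^ k
          * (1 - (1 - (1 - p) ^ (Δ + 1))) ^ (N - k)) :=
  trigger_coincidences_binomial_general E hmeas hindep hval p hp0 hp1 hbern Δ N ts hgap k
end

section
/- Let (E_t)_{t=1}^T be independent and identically distributed Bernoulli random variables with success probability p ∈ [0,1], let Δ ∈ ℕ, and let s_1 < s_2 < ... < s_N be deterministic time indices in {Δ+1,...,T} satisfying s_{j+1} − s_j > Δ for all j = 1,...,N−1. Then the number of precursor coincidences K = Σ_{j=1}^N max_{δ=0,...,Δ} E_{s_j−δ} has the binomial distribution with parameters N and π = 1 − (1−p)^{Δ+1}; that is, P(K = k) = C(N,k) · π^k · (1−π)^{N−k} for every 0 ≤ k ≤ N. -/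
open MeasureTheory ProbabilityTheory

lemma meas_fsup {Ω : Type*} [MeasurableSpace Ω] (s : Finset ℕ) (f : ℕ → Ω → ℕ)
    (hf : ∀ i, Measurable (f i)) : Measurable fun ω => s.sup fun i => f i ω := by
  classical
  induction s using Finset.induction with
  | empty => simpa using measurable_const
  | insert _ _ h ih => simp only [Finset.sup_insert]; exact (hf _).sup ih

lemma binom_aux {Ω : Type*} [MeasureSpace Ω] [IsProbabilityMeasure (ℙ : Measure Ω)]
    (X : ℕ → Ω → ℕ) (hmeas : ∀ j, Measurable (X j)) (N : ℕ)
    (hval : ∀ j < N, ∀ ω, X j ω = 0 ∨ X j ω = 1)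
    (q : ENNReal) (hq : q ≤ 1)
    (h0 : ∀ j < N, ℙ {ω | X j ω = 0} = q)
    (hind : ∀ m < N, IndepFun (fun ω => ∑ j ∈ Finset.range m, X j ω) (X m) ℙ) :
    ∀ n ≤ N, ∀ k, ℙ {ω | (∑ j ∈ Finset.range n, X j ω) = k}
      = (n.choose k : ENNReal) * (1 - q) ^ k * q ^ (n - k) := by
  intro n
  induction n with
  | zero =>
    intro _ k
    rcases Nat.eq_zero_or_pos k with rfl | hk
    · simp
    · have : {ω : Ω | (∑ j ∈ Finset.range 0, X j ω) = k} = ∅ := by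
        ext ω; simp; omega
      rw [this]
      simp [Nat.choose_eq_zero_of_lt hk]
  | succ n ih =>
    intro hn k
    have hnN : n < N := hn
    have ihn := ih (le_of_lt hnN)
    have hI := hind n hnN
    have hS : Measurable (fun ω => ∑ j ∈ Finset.range n, X j ω) := by
      exact Finset.measurable_sum _ (fun j _ => hmeas j)
    have key : ∀ a b : ℕ,
        ℙ ({ω | (∑ j ∈ Finset.range n, X j ω) = a} ∩ {ω | X n ω = b})
          = ℙ {ω | (∑ j ∈ Finset.range n, X j ω) = a} * ℙ {ω | X n ω = b} := by
      intro a b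
      exact hI.measure_inter_preimage_eq_mul _ _ (measurableSet_singleton a)
        (measurableSet_singleton b)
    have hq1 : ℙ {ω | X n ω = 1} = 1 - q := by
      have hc : {ω | X n ω = 1} = {ω | X n ω = 0}ᶜ := by
        ext ω; rcases hval n hnN ω with h | h <;> simp [h]
      have hm : MeasurableSet {ω | X n ω = 0} := hmeas n (measurableSet_singleton 0)
      rw [hc, prob_compl_eq_one_sub hm, h0 n hnN]
    have hq0 : ℙ {ω | X n ω = 0} = q := h0 n hnN
    rcases Nat.eq_zero_or_pos k with rfl | hk
    · have hset : {ω : Ω | (∑ j ∈ Finset.range (n+1), X j ω) = 0}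
          = {ω | (∑ j ∈ Finset.range n, X j ω) = 0} ∩ {ω | X n ω = 0} := by
        ext ω; simp [Finset.sum_range_succ, Nat.add_eq_zero]
      rw [hset, key 0 0, ihn 0, hq0]
      simp [pow_succ]
    · obtain ⟨k', rfl⟩ : ∃ k', k = k' + 1 := ⟨k - 1, by omega⟩
      have hset : {ω : Ω | (∑ j ∈ Finset.range (n+1), X j ω) = k' + 1}
          = ({ω | (∑ j ∈ Finset.range n, X j ω) = k' + 1} ∩ {ω | X n ω = 0})
            ∪ ({ω | (∑ j ∈ Finset.range n, X j ω) = k'} ∩ {ω | X n ω = 1}) := by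
        ext ω
        simp only [Set.mem_setOf_eq, Set.mem_union, Set.mem_inter_iff,
          Finset.sum_range_succ]
        rcases hval n hnN ω with h | h <;> simp [h] <;> omega
      have hdisj : Disjoint
          ({ω : Ω | (∑ j ∈ Finset.range n, X j ω) = k' + 1} ∩ {ω | X n ω = 0})
          ({ω | (∑ j ∈ Finset.range n, X j ω) = k'} ∩ {ω | X n ω = 1}) := by
        apply Set.disjoint_left.2
        rintro ω ⟨-, h0'⟩ ⟨-, h1'⟩
        simp only [Set.mem_setOf_eq] at h0' h1'; omega
      have hm2 : MeasurableSet ({ω : Ω | (∑ j ∈ Finset.range n, X j ω) = k'}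
          ∩ {ω | X n ω = 1}) :=
        (hS (measurableSet_singleton k')).inter (hmeas n (measurableSet_singleton 1))
      rw [hset, measure_union hdisj hm2, key (k'+1) 0, key k' 1, ihn (k'+1), ihn k',
        hq0, hq1]
      -- algebra
      rcases lt_or_ge n (k' + 1) with hlt | hle
      · rcases Nat.lt_or_ge n k' with hlt' | hge
        · simp [Nat.choose_eq_zero_of_lt hlt', Nat.choose_eq_zero_of_lt hlt,
            Nat.choose_eq_zero_of_lt (by omega : n + 1 < k' + 1)]
        · have hk'n : k' = n := by omega
          subst hk'n
          simp [Nat.choose_eq_zero_of_lt (Nat.lt_succ_self k'), Nat.choose_self,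
            Nat.sub_self, pow_succ, mul_comm]
      · have e1 : n - (k' + 1) + 1 = n - k' := by omega
        have e2 : n + 1 - (k' + 1) = n - k' := by omega
        rw [Nat.choose_succ_succ' n k']
        push_cast
        have h1 : q ^ (n - (k' + 1)) * q = q ^ (n - k') := by rw [← pow_succ, e1]
        have h2 : ((1:ENNReal) - q) ^ (k' + 1) = (1 - q) ^ k' * (1 - q) := pow_succ _ _
        rw [mul_assoc _ _ q, h1, h2]
        ring

/-- For an iid Bernoulli(p) process `E` of length `T` and deterministic event times
`s_1 < ... < s_N` in `{Δ+1,...,T}` separated by more than `Δ` time steps, the number of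
precursor coincidences `K = Σ_j max_{δ=0,...,Δ} E_{s_j-δ}` is binomially distributed with
parameters `N` and `π = 1 - (1-p)^(Δ+1)`. -/
theorem precursor_coincidences_binomial
    {Ω : Type*} [MeasureSpace Ω] [IsProbabilityMeasure (ℙ : Measure Ω)]
    (E : ℕ → Ω → ℕ) (hmeas : ∀ t, Measurable (E t))
    (hindep : iIndepFun E ℙ)
    (hval : ∀ t ω, E t ω = 0 ∨ E t ω = 1)
    (p : ℝ) (hp0 : 0 ≤ p) (hp1 : p ≤ 1)
    (hbern : ∀ t, ℙ {ω | E t ω = 1} = ENNReal.ofReal p)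
    (T Δ N : ℕ) (ss : ℕ → ℕ)
    (hrange : ∀ j < N, Δ + 1 ≤ ss j ∧ ss j ≤ T)
    (hgap : ∀ j, j + 1 < N → ss j + Δ < ss (j + 1))
    (k : ℕ) (hk : k ≤ N) :
    ℙ {ω | (∑ j ∈ Finset.range N,
        (Finset.range (Δ + 1)).sup (fun δ => E (ss j - δ) ω)) = k}
      = ENNReal.ofReal ((N.choose k : ℝ) * (1 - (1 - p) ^ (Δ + 1)) ^ k
          * (1 - (1 - (1 - p) ^ (Δ + 1))) ^ (N - k)) := by
  classical
  set X : ℕ → Ω → ℕ := fun j ω => (Finset.range (Δ + 1)).sup (fun δ => E (ss j - δ) ω)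
    with hX
  set r : ℝ := (1 - p) ^ (Δ + 1) with hr
  have hr0 : 0 ≤ r := pow_nonneg (by linarith) _
  have hr1 : r ≤ 1 := pow_le_one₀ (by linarith) (by linarith)
  set q : ENNReal := ENNReal.ofReal r with hqdef
  set W : ℕ → Finset ℕ := fun j => (Finset.range (Δ + 1)).image (fun δ => ss j - δ)
    with hW
  -- measurability
  have hXM : ∀ j, Measurable (X j) := fun j =>
    meas_fsup _ _ (fun δ => hmeas (ss j - δ))
  -- values 0/1
  have hXval : ∀ j, ∀ ω : Ω, X j ω = 0 ∨ X j ω = 1 := by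
    intro j ω
    have h1 : X j ω ≤ 1 := Finset.sup_le fun δ _ => by
      rcases hval (ss j - δ) ω with h | h <;> simp [h]
    omega
  -- single-site probability
  have hE0 : ∀ t, ℙ {ω | E t ω = 0} = ENNReal.ofReal (1 - p) := by
    intro t
    have hc : {ω | E t ω = 0} = {ω | E t ω = 1}ᶜ := by
      ext ω; rcases hval t ω with h | h <;> simp [h]
    have hm : MeasurableSet {ω : Ω | E t ω = 1} := hmeas t (measurableSet_singleton 1)
    rw [hc, prob_compl_eq_one_sub hm, hbern t, ENNReal.ofReal_sub 1 hp0,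
      ENNReal.ofReal_one]
  -- window probability
  have h0 : ∀ j < N, ℙ {ω | X j ω = 0} = q := by
    intro j hj
    have hjr := (hrange j hj).1
    have hset : {ω | X j ω = 0} = ⋂ t ∈ W j, {ω | E t ω = 0} := by
      ext ω
      simp only [Set.mem_setOf_eq, Set.mem_iInter, hW, Finset.mem_image,
        Finset.mem_range]
      constructor
      · rintro h t ⟨δ, hδ, rfl⟩
        have h' : X j ω ≤ 0 := le_of_eq h
        rw [Finset.sup_le_iff] at h'
        exact Nat.le_zero.1 (h' δ (Finset.mem_range.2 hδ))
      · intro h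
        rw [hX]
        simp only
        rw [← Nat.le_zero, Finset.sup_le_iff]
        intro δ hδ
        exact Nat.le_zero.2 (h _ ⟨δ, Finset.mem_range.1 hδ, rfl⟩)
    have hcard : (W j).card = Δ + 1 := by
      rw [hW]
      simp only
      rw [Finset.card_image_of_injOn, Finset.card_range]
      intro a ha b hb hab
      simp only [Finset.coe_range, Set.mem_Iio] at ha hb
      have hab' : ss j - a = ss j - b := hab
      omega
    rw [hset, hindep.meas_biInter (S := W j) (s := fun t => {ω | E t ω = 0})
      (fun t _ => ⟨{0}, trivial, rfl⟩)]
    calc (∏ t ∈ W j, ℙ {ω | E t ω = 0})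
        = ∏ t ∈ W j, ENNReal.ofReal (1 - p) := Finset.prod_congr rfl fun t _ => hE0 t
      _ = ENNReal.ofReal (1 - p) ^ (W j).card := (Finset.prod_const _)
      _ = q := by rw [hcard, hqdef, hr, ENNReal.ofReal_pow (by linarith)]
  -- gaps
  have hmono : ∀ m, m < N → ∀ j, j < m → ss j + Δ < ss m := by
    intro m
    induction m with
    | zero => intro _ j h; omega
    | succ m ih =>
      intro hm j hj
      rcases Nat.lt_or_ge j m with h | h
      · have h1 := ih (by omega) j h
        have h2 := hgap m (by omega)
        omega
      · have hjm' : j = m := by omega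
        subst hjm'
        exact hgap j hm
  have hdisjW : ∀ j m, j < m → m < N → Disjoint (W j) (W m) := by
    intro j m hjm hm
    rw [Finset.disjoint_left]
    rintro t ht ht'
    simp only [hW, Finset.mem_image, Finset.mem_range] at ht ht'
    obtain ⟨a, ha, rfl⟩ := ht
    obtain ⟨b, hb, hbe⟩ := ht'
    have h1 := (hrange j (lt_trans hjm hm)).1
    have h2 := (hrange m hm).1
    have h3 := hmono m hm j hjm
    omega
  -- independence
  have hind : ∀ m < N, IndepFun (fun ω => ∑ j ∈ Finset.range m, X j ω) (X m) ℙ := by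
    intro m hm
    set Tm : Finset ℕ := (Finset.range m).biUnion W with hTm
    have hdisj : Disjoint Tm (W m) := by
      rw [hTm]
      exact Finset.disjoint_biUnion_left _ _ _ |>.2
        fun j hj => hdisjW j m (Finset.mem_range.1 hj) hm
    have hI := hindep.indepFun_finset Tm (W m) hdisj hmeas
    set g : (∀ i : Tm, ℕ) → ℕ := fun v =>
      ∑ j ∈ (Finset.range m).attach, (Finset.range (Δ + 1)).attach.sup
        (fun δ => v ⟨ss j.1 - δ.1, by
          rw [hTm]
          exact Finset.mem_biUnion.2 ⟨j.1, j.2, Finset.mem_image_of_mem _ δ.2⟩⟩)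
      with hg
    set h : (∀ i : W m, ℕ) → ℕ := fun v =>
      (Finset.range (Δ + 1)).attach.sup
        (fun δ => v ⟨ss m - δ.1, Finset.mem_image_of_mem _ δ.2⟩) with hh
    have hcomp := hI.comp (measurable_of_countable g) (measurable_of_countable h)
    have e1 : (g ∘ fun a (i : Tm) => E i a) = fun ω => ∑ j ∈ Finset.range m, X j ω := by
      funext ω
      simp only [Function.comp_apply, hg]
      rw [← Finset.sum_attach (Finset.range m) (fun j => X j ω)]
      refine Finset.sum_congr rfl fun j _ => ?_
      exact Finset.sup_attach (Finset.range (Δ + 1)) (fun δ => E (ss j.1 - δ) ω)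
    have e2 : (h ∘ fun a (i : W m) => E i a) = X m := by
      funext ω
      simp only [Function.comp_apply, hh]
      exact Finset.sup_attach (Finset.range (Δ + 1)) (fun δ => E (ss m - δ) ω)
    rw [e1, e2] at hcomp
    exact hcomp
  have hmain := binom_aux X hXM N (fun j _ => hXval j) q
    (by rw [hqdef]; exact ENNReal.ofReal_le_one.2 hr1) h0 hind N le_rfl k
  rw [hmain]
  have hπ0 : (0:ℝ) ≤ 1 - r := by linarith
  have h1q : 1 - q = ENNReal.ofReal (1 - r) := by
    rw [hqdef, ENNReal.ofReal_sub 1 hr0, ENNReal.ofReal_one]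
  rw [show (1 : ℝ) - (1 - (1 - p) ^ (Δ + 1)) = r by rw [hr]; ring]
  rw [ENNReal.ofReal_mul (by positivity), ENNReal.ofReal_mul (by positivity),
    ENNReal.ofReal_natCast, ENNReal.ofReal_pow hπ0, ENNReal.ofReal_pow hr0,
    ← h1q, ← hqdef]
end

section
/- Let U_1, ..., U_N be independent and identically distributed real-valued random variables, let τ_1 < τ_2 < ... < τ_M be increasing thresholds, and let K_i = #{j ∈ {1,...,N} : U_j > τ_i} for i = 1,...,M. Then the sequence (K_1, ..., K_M) has the first-order Markov property: for every i ∈ {2,...,M} and all values k_1 ≥ k_2 ≥ ... ≥ k_{i−1} with P(K_1 = k_1, ..., K_{i−1} = k_{i−1}) > 0, and every k, one has P(K_i = k | K_1 = k_1, ..., K_{i−1} = k_{i−1}) = P(K_i = k | K_{i−1} = k_{i−1}). -/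
/-!
Condition on the set `S` of indices `j` with `U_j > τ_{i-1}`. Given `S`, the earlier counts
(thresholds `τ_l < τ_{i-1}`) only see `min (U_j) τ_{i-1}`, i.e. the coordinates outside `S`,
while `K_i` only sees the coordinates in `S`. By independence the two parts factor, and by
exchangeability the factor from `S` depends on `S` only through `#S = K_{i-1}`. Summing over
all `S` of size `k_{i-1}`, the conditional probability of `K_i = k` given the whole past is
the same ratio `P(U_1, …, U_m > τ_{i-1}, exactly k of them > τ_i) / π(τ_{i-1})^m`,
`m = k_{i-1}`, as given `K_{i-1} = k_{i-1}` alone.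
-/

open MeasureTheory ProbabilityTheory Finset

theorem MeasureTheory.Measure.pi_setOf_subtype_mem_and {ι : Type*} [Fintype ι] {α : ι → Type*}
    [∀ i, MeasurableSpace (α i)] (μ : ∀ i, Measure (α i)) [∀ i, SigmaFinite (μ i)]
    (p : ι → Prop) [DecidablePred p] [Fintype (Subtype p)] [Fintype {i // ¬ p i}]
    (C : Set (∀ i : Subtype p, α i)) (D : Set (∀ i : {i // ¬ p i}, α i)) :
    Measure.pi μ {x | (fun i : Subtype p => x i) ∈ C ∧ (fun i : {i // ¬ p i} => x i) ∈ D} =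
      Measure.pi (fun i : Subtype p => μ i) C * Measure.pi (fun i : {i // ¬ p i} => μ i) D := by
  obtain rfl := Subsingleton.elim ‹Fintype (Subtype p)› (Subtype.fintype p)
  obtain rfl := Subsingleton.elim ‹Fintype {i // ¬ p i}› (Subtype.fintype _)
  rw [← Measure.prod_prod, ← (measurePreserving_piEquivPiSubtypeProd μ p).measure_preimage_equiv]
  rfl

theorem ProbabilityTheory.iIndepFun.exists_map_eq_pi {Ω ι β : Type*} [MeasurableSpace Ω]
    [MeasurableSpace β] [Nonempty β] [Fintype ι] {P : Measure Ω} {U : ι → Ω → β}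
    (hU : ∀ j, AEMeasurable (U j) P) (hindep : iIndepFun U P)
    (hident : ∀ i j, P.map (U i) = P.map (U j)) :
    ∃ μ : Measure β, IsProbabilityMeasure μ ∧
      P.map (fun ω j => U j ω) = Measure.pi fun _ => μ := by
  have := hindep.isProbabilityMeasure
  obtain ⟨μ, hμ, hlaw⟩ : ∃ μ : Measure β, IsProbabilityMeasure μ ∧ ∀ j, P.map (U j) = μ := by
    rcases isEmpty_or_nonempty ι with hι | ⟨⟨j₀⟩⟩
    · exact ⟨Measure.dirac (Classical.arbitrary β), inferInstance, isEmptyElim⟩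
    · exact ⟨P.map (U j₀), Measure.isProbabilityMeasure_map (hU j₀), fun j => hident j j₀⟩
  exact ⟨μ, hμ, by rw [hindep.map_fun_eq_pi_map hU, funext hlaw]⟩

theorem ProbabilityTheory.cond_preimage {Ω β : Type*} [MeasurableSpace Ω] [MeasurableSpace β]
    (P : Measure Ω) {V : Ω → β} (hV : Measurable V) {s t : Set β} (hs : MeasurableSet s)
    (ht : MeasurableSet t) : P[V ⁻¹' t | V ⁻¹' s] = (P.map V)[t | s] := by
  rw [cond_apply' (hV ht), cond_apply' ht, Measure.map_apply hV hs,
    Measure.map_apply hV (hs.inter ht), Set.preimage_inter]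

section Exceedance

variable {ι κ : Type*}

def capAt (t : ℝ) (x : ι → ℝ) : ι → ℝ := fun j => min (x j) t

variable [Fintype ι] [Fintype κ]

noncomputable def exceedSet (t : ℝ) (x : ι → ℝ) : Finset ι := univ.filter fun j => t < x j

noncomputable def exceedCount (t : ℝ) (x : ι → ℝ) : ℕ := (exceedSet t x).card

theorem exceedSet_eq_iff {t : ℝ} {x : ι → ℝ} {S : Finset ι} :
    exceedSet t x = S ↔ ∀ j, t < x j ↔ j ∈ S := by
  simp [exceedSet, Finset.ext_iff]

theorem measurableSet_exceedSet_eq (t : ℝ) (S : Finset ι) :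
    MeasurableSet {x : ι → ℝ | exceedSet t x = S} := by
  simp only [exceedSet_eq_iff, Set.ofPred_forall]
  exact .iInter fun j => measurableSet_setOfPred.2 <|
    (measurableSet_setOfPred.1 (measurableSet_lt measurable_const (measurable_pi_apply j))).iff
      measurable_const

theorem setOf_exceedCount_eq (t : ℝ) (n : ℕ) :
    {x : ι → ℝ | exceedCount t x = n} = exceedSet t ⁻¹' ↑(powersetCard n (univ : Finset ι)) := by
  ext x; simp [exceedCount, mem_powersetCard]

theorem measurableSet_exceedCount_eq (t : ℝ) (n : ℕ) :
    MeasurableSet {x : ι → ℝ | exceedCount t x = n} := by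
  rw [setOf_exceedCount_eq, ← Finset.set_biUnion_preimage_singleton]
  exact .biUnion (countable_toSet _) fun S _ => measurableSet_exceedSet_eq t S

theorem exceedCount_capAt {s t : ℝ} (h : s < t) (x : ι → ℝ) :
    exceedCount s (capAt t x) = exceedCount s x := by
  simp [exceedCount, exceedSet, capAt, h]

theorem exceedCount_comp_equiv (t : ℝ) (e : κ ≃ ι) (x : ι → ℝ) :
    exceedCount t (x ∘ e) = exceedCount t x :=
  card_equiv e fun a => by simp [exceedSet]

theorem exceedCount_eq_of_exceedSet_eq {τ τ' : ℝ} (h : τ ≤ τ') {x : ι → ℝ} {S : Finset ι}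
    (hx : exceedSet τ x = S) : exceedCount τ' x = exceedCount τ' (fun j : S => x j) := by
  refine (card_bij (fun j _ => j.1) (fun j hj => ?_) (fun _ _ _ _ => Subtype.ext)
    fun j hj => ?_).symm
  · simpa [exceedSet] using hj
  · simp only [exceedSet, mem_filter, mem_univ, true_and] at hj ⊢
    exact ⟨⟨j, hx ▸ by simpa [exceedSet] using h.trans_lt hj⟩, hj, rfl⟩

theorem capAt_eq_of_exceedSet_eq [DecidableEq ι] {τ : ℝ} {x : ι → ℝ} {S : Finset ι}
    (hx : exceedSet τ x = S) : capAt τ x = fun j => if j ∈ S then τ else x j := by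
  funext j
  have := exceedSet_eq_iff.1 hx j
  split_ifs with hj
  · exact min_eq_right (this.2 hj).le
  · exact min_eq_left (not_lt.1 fun h => hj (this.1 h))

theorem pi_setOf_exceedCount_congr (μ : Measure ℝ) [SigmaFinite μ] (e : κ ≃ ι) (τ τ' : ℝ)
    (k : ℕ) :
    Measure.pi (fun _ : κ => μ) {y | (∀ j, τ < y j) ∧ exceedCount τ' y = k} =
      Measure.pi (fun _ : ι => μ) {y | (∀ j, τ < y j) ∧ exceedCount τ' y = k} := by
  rw [← (measurePreserving_piCongrLeft (fun _ : ι => μ) e).measure_preimage_equiv]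
  congr 1
  ext y
  have hy : MeasurableEquiv.piCongrLeft (fun _ => ℝ) e y ∘ e = y :=
    funext (Equiv.piCongrLeft_apply_apply (fun _ => ℝ) e y)
  simp only [Set.mem_preimage, Set.mem_ofPred_eq]
  rw [← exceedCount_comp_equiv τ' e, hy, ← e.forall_congr_right]
  simp only [← Function.comp_apply (f := MeasurableEquiv.piCongrLeft (fun _ => ℝ) e y), hy]

theorem exceedSet_eq_iff_subtype {τ : ℝ} {x : ι → ℝ} {S : Finset ι} :
    exceedSet τ x = S ↔ (∀ j : S, τ < x j) ∧ ∀ j : {j // j ∉ S}, x j ≤ τ := by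
  rw [exceedSet_eq_iff]
  constructor
  · intro h
    exact ⟨fun j => (h j).2 j.2, fun j => not_lt.1 fun hj => j.2 ((h j).1 hj)⟩
  · rintro ⟨hS, hSc⟩ j
    exact ⟨fun hj => by_contra fun hjS => (hSc ⟨j, hjS⟩).not_gt hj, fun hjS => hS ⟨j, hjS⟩⟩

theorem exists_measure_exceedSet_eq_mul (μ : Measure ℝ) [SigmaFinite μ] {τ τ' : ℝ} (h : τ ≤ τ')
    (S : Finset ι) (G : Set (ι → ℝ)) (k : ℕ) :
    ∃ d, Measure.pi (fun _ => μ) ({x | exceedSet τ x = S} ∩ capAt τ ⁻¹' G) =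
        μ (Set.Ioi τ) ^ S.card * d ∧
      Measure.pi (fun _ => μ)
          ({x | exceedSet τ x = S} ∩ (capAt τ ⁻¹' G ∩ {x | exceedCount τ' x = k})) =
        Measure.pi (fun _ : S => μ) {y | (∀ j, τ < y j) ∧ exceedCount τ' y = k} * d := by
  classical
  -- what `{exceedSet τ x = S} ∩ capAt τ ⁻¹' G` demands of the coordinates outside `S`
  set D : Set ({j // j ∉ S} → ℝ) :=
    {z | (∀ j, z j ≤ τ) ∧ (fun j => if h : j ∈ S then τ else z ⟨j, h⟩) ∈ G}
  have hmem : ∀ x : ι → ℝ, x ∈ {x | exceedSet τ x = S} ∩ capAt τ ⁻¹' G ↔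
      (∀ j : S, τ < x j) ∧ (fun j : {j // j ∉ S} => x j) ∈ D := by
    intro x
    constructor
    · rintro ⟨hx, hG⟩
      rw [Set.mem_preimage, capAt_eq_of_exceedSet_eq hx] at hG
      exact ⟨(exceedSet_eq_iff_subtype.1 hx).1, (exceedSet_eq_iff_subtype.1 hx).2, hG⟩
    · rintro ⟨hS, hSc, hG⟩
      have hx : exceedSet τ x = S := exceedSet_eq_iff_subtype.2 ⟨hS, hSc⟩
      refine ⟨hx, ?_⟩
      rw [Set.mem_preimage, capAt_eq_of_exceedSet_eq hx]
      exact hG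
  refine ⟨Measure.pi (fun _ => μ) D, ?_, ?_⟩
  · have hC : {y : S → ℝ | ∀ j, τ < y j} = Set.pi Set.univ fun _ => Set.Ioi τ := by
      ext y; simp
    have hset : {x | exceedSet τ x = S} ∩ capAt τ ⁻¹' G =
        {x | (fun j : S => x j) ∈ {y | ∀ j, τ < y j} ∧ (fun j : {j // j ∉ S} => x j) ∈ D} :=
      Set.ext hmem
    rw [hset, Measure.pi_setOf_subtype_mem_and, hC, Measure.pi_pi, prod_const, card_univ,
      Fintype.card_coe]
  · have hset : {x | exceedSet τ x = S} ∩ (capAt τ ⁻¹' G ∩ {x | exceedCount τ' x = k}) =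
        {x | (fun j : S => x j) ∈ {y | (∀ j, τ < y j) ∧ exceedCount τ' y = k} ∧
          (fun j : {j // j ∉ S} => x j) ∈ D} := by
      ext x
      rw [← Set.inter_assoc]
      constructor
      · rintro ⟨hx, hk⟩
        exact ⟨⟨((hmem x).1 hx).1, (exceedCount_eq_of_exceedSet_eq h hx.1).symm.trans hk⟩,
          ((hmem x).1 hx).2⟩
      · rintro ⟨⟨hS, hk⟩, hD⟩
        have hx := (hmem x).2 ⟨hS, hD⟩
        exact ⟨hx, (exceedCount_eq_of_exceedSet_eq h hx.1).trans hk⟩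
    rw [hset, Measure.pi_setOf_subtype_mem_and]

theorem measure_exceedCount_eq_inter_eq_sum (ν : Measure (ι → ℝ)) (t : ℝ) (m : ℕ)
    (X : Set (ι → ℝ)) :
    ν ({x | exceedCount t x = m} ∩ X) =
      ∑ S ∈ powersetCard m univ, ν ({x | exceedSet t x = S} ∩ X) := by
  rw [← Measure.restrict_apply (measurableSet_exceedCount_eq t m), setOf_exceedCount_eq,
    ← sum_measure_preimage_singleton _ fun S _ => measurableSet_exceedSet_eq t S]
  exact sum_congr rfl fun S _ => Measure.restrict_apply (measurableSet_exceedSet_eq t S)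

theorem exists_measure_exceedCount_eq_mul (μ : Measure ℝ) [SigmaFinite μ] {τ τ' : ℝ}
    (h : τ ≤ τ') (m k : ℕ) (G : Set (ι → ℝ)) :
    ∃ c, Measure.pi (fun _ => μ) ({x | exceedCount τ x = m} ∩ capAt τ ⁻¹' G) =
        μ (Set.Ioi τ) ^ m * c ∧
      Measure.pi (fun _ => μ)
          ({x | exceedCount τ x = m} ∩ capAt τ ⁻¹' G ∩ {x | exceedCount τ' x = k}) =
        Measure.pi (fun _ : Fin m => μ) {y | (∀ j, τ < y j) ∧ exceedCount τ' y = k} * c := by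
  choose d hd₁ hd₂ using fun S => exists_measure_exceedSet_eq_mul μ h S G k
  refine ⟨∑ S ∈ powersetCard m univ, d S, ?_, ?_⟩
  · rw [measure_exceedCount_eq_inter_eq_sum, mul_sum]
    refine sum_congr rfl fun S hS => ?_
    rw [hd₁, (mem_powersetCard.1 hS).2]
  · rw [Set.inter_assoc, measure_exceedCount_eq_inter_eq_sum, mul_sum]
    refine sum_congr rfl fun S hS => ?_
    rw [hd₂, pi_setOf_exceedCount_congr μ
      (S.equivFin.trans (finCongr (mem_powersetCard.1 hS).2)).symm]

theorem cond_exceedCount_eq_div (μ : Measure ℝ) [IsFiniteMeasure μ] {τ τ' : ℝ} (h : τ ≤ τ')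
    {m : ℕ} (k : ℕ) {G : Set (ι → ℝ)}
    (hpos : Measure.pi (fun _ => μ) ({x | exceedCount τ x = m} ∩ capAt τ ⁻¹' G) ≠ 0) :
    (Measure.pi fun _ => μ)[{x | exceedCount τ' x = k} |
        {x | exceedCount τ x = m} ∩ capAt τ ⁻¹' G] =
      Measure.pi (fun _ : Fin m => μ) {y | (∀ j, τ < y j) ∧ exceedCount τ' y = k} /
        μ (Set.Ioi τ) ^ m := by
  obtain ⟨c, hc₁, hc₂⟩ := exists_measure_exceedCount_eq_mul μ h m k G
  have hfin := measure_ne_top (Measure.pi fun _ => μ)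
    ({x | exceedCount τ x = m} ∩ capAt τ ⁻¹' G)
  rw [hc₁] at hpos hfin
  have hc_top : c ≠ ⊤ := fun hc =>
    hfin (ENNReal.mul_eq_top.2 (.inl ⟨left_ne_zero_of_mul hpos, hc⟩))
  rw [cond_apply' (measurableSet_exceedCount_eq τ' k), hc₁, hc₂,
    ← ENNReal.div_eq_inv_mul, ENNReal.mul_div_mul_right _ _ (right_ne_zero_of_mul hpos) hc_top]

theorem cond_exceedCount_inter_capAt_preimage_eq_cond (μ : Measure ℝ) [IsFiniteMeasure μ] {τ τ' : ℝ}
    (h : τ ≤ τ') {m : ℕ} (k : ℕ) {G : Set (ι → ℝ)}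
    (hpos : Measure.pi (fun _ => μ) ({x | exceedCount τ x = m} ∩ capAt τ ⁻¹' G) ≠ 0) :
    (Measure.pi fun _ => μ)[{x | exceedCount τ' x = k} |
        {x | exceedCount τ x = m} ∩ capAt τ ⁻¹' G] =
      (Measure.pi fun _ : ι => μ)[{x | exceedCount τ' x = k} | {x | exceedCount τ x = m}] := by
  have hB : {x : ι → ℝ | exceedCount τ x = m} =
      {x | exceedCount τ x = m} ∩ capAt τ ⁻¹' Set.univ := by simp
  rw [cond_exceedCount_eq_div μ h k hpos, hB, cond_exceedCount_eq_div μ h k]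
  rw [← hB]
  exact fun h0 => hpos (measure_mono_null Set.inter_subset_left h0)

theorem setOf_forall_exceedCount_eq_inter {τs : ℕ → ℝ} {ks : ℕ → ℕ} {n : ℕ} (hn : 1 ≤ n)
    (hτs : ∀ l, 1 ≤ l → l < n → τs l < τs n) :
    {x : ι → ℝ | ∀ l, 1 ≤ l → l ≤ n → exceedCount (τs l) x = ks l} =
      {x | exceedCount (τs n) x = ks n} ∩
        capAt (τs n) ⁻¹' {y | ∀ l, 1 ≤ l → l < n → exceedCount (τs l) y = ks l} := by
  ext x
  simp only [Set.mem_inter_iff, Set.mem_preimage, Set.mem_ofPred_eq]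
  constructor
  · intro hx
    exact ⟨hx n hn le_rfl, fun l hl hln =>
      (exceedCount_capAt (hτs l hl hln) x).trans (hx l hl hln.le)⟩
  · rintro ⟨hxn, hx⟩ l hl hln
    rcases hln.lt_or_eq with hln | rfl
    · exact (exceedCount_capAt (hτs l hl hln) x).symm.trans (hx l hl hln)
    · exact hxn

theorem measurableSet_setOf_forall_exceedCount (τs : ℕ → ℝ) (ks : ℕ → ℕ) (n : ℕ) :
    MeasurableSet {x : ι → ℝ | ∀ l, 1 ≤ l → l ≤ n → exceedCount (τs l) x = ks l} := by
  simp only [Set.ofPred_forall]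
  exact .iInter fun l => .iInter fun _ => .iInter fun _ => measurableSet_exceedCount_eq _ _

end Exceedance

theorem exceedance_counts_markov_general
    {Ω : Type*} [MeasureSpace Ω]
    (N : ℕ) (U : Fin N → Ω → ℝ) (hmeas : ∀ j, Measurable (U j))
    (hindep : iIndepFun U ℙ)
    (hident : ∀ i j, Measure.map (U i) ℙ = Measure.map (U j) ℙ)
    (M : ℕ) (τs : ℕ → ℝ) (hτ : ∀ i, 1 ≤ i → i < M → τs i < τs (i + 1))
    (K : ℕ → Ω → ℕ)
    (hK : ∀ i ω, K i ω = (Finset.univ.filter (fun j => τs i < U j ω)).card)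
    (i : ℕ) (hi2 : 2 ≤ i) (hiM : i ≤ M)
    (ks : ℕ → ℕ)
    (hpos : 0 < ℙ {ω | ∀ l, 1 ≤ l → l ≤ i - 1 → K l ω = ks l})
    (k : ℕ) :
    ℙ[|{ω | ∀ l, 1 ≤ l → l ≤ i - 1 → K l ω = ks l}] {ω | K i ω = k}
      = ℙ[|{ω | K (i - 1) ω = ks (i - 1)}] {ω | K i ω = k} := by
  obtain rfl : K = fun l ω => exceedCount (τs l) fun j => U j ω := funext₂ hK
  obtain ⟨μ, hμ, hlaw⟩ := hindep.exists_map_eq_pi (fun j => (hmeas j).aemeasurable) hident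
  have hV : Measurable fun ω j => U j ω := measurable_pi_lambda _ hmeas
  have hτs : StrictMonoOn τs (Set.Icc 1 M) :=
    strictMonoOn_of_lt_add_one Set.ordConnected_Icc fun a _ ha ha' => hτ a ha.1 ha'.2
  have hpast := setOf_forall_exceedCount_eq_inter (ι := Fin N) (ks := ks) (n := i - 1)
    (by omega) fun l hl hli => hτs ⟨hl, by omega⟩ ⟨by omega, by omega⟩ hli
  have hH := measurableSet_setOf_forall_exceedCount (ι := Fin N) τs ks (i - 1)
  have hB := measurableSet_exceedCount_eq (ι := Fin N) (τs (i - 1)) (ks (i - 1))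
  have hF := measurableSet_exceedCount_eq (ι := Fin N) (τs i) k
  have hpast_pos : Measure.pi (fun _ : Fin N => μ)
      {x | ∀ l, 1 ≤ l → l ≤ i - 1 → exceedCount (τs l) x = ks l} ≠ 0 := by
    rw [← hlaw, Measure.map_apply hV hH]; exact hpos.ne'
  have hmarkov := cond_exceedCount_inter_capAt_preimage_eq_cond μ
    (hτs ⟨by omega, by omega⟩ ⟨by omega, hiM⟩ (by omega)).le k (hpast ▸ hpast_pos)
  rw [← hpast, ← hlaw, ← cond_preimage ℙ hV hH hF, ← cond_preimage ℙ hV hB hF] at hmarkov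
  exact hmarkov

/-- For iid real-valued random variables `U_1, ..., U_N` and increasing thresholds
`τ_1 < ... < τ_M`, the exceedance counts `K_i = #{j : U_j > τ_i}` form a first-order
Markov sequence: conditioning on `K_1 = k_1, ..., K_{i-1} = k_{i-1}` is the same as
conditioning on `K_{i-1} = k_{i-1}` alone. -/
theorem exceedance_counts_markov
    {Ω : Type*} [MeasureSpace Ω] [IsProbabilityMeasure (ℙ : Measure Ω)]
    (N : ℕ) (U : Fin N → Ω → ℝ) (hmeas : ∀ j, Measurable (U j))
    (hindep : iIndepFun U ℙ)
    (hident : ∀ i j, Measure.map (U i) ℙ = Measure.map (U j) ℙ)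
    (M : ℕ) (τs : ℕ → ℝ) (hτ : ∀ i, 1 ≤ i → i < M → τs i < τs (i + 1))
    (K : ℕ → Ω → ℕ)
    (hK : ∀ i ω, K i ω = (Finset.univ.filter (fun j => τs i < U j ω)).card)
    (i : ℕ) (hi2 : 2 ≤ i) (hiM : i ≤ M)
    (ks : ℕ → ℕ) (hks : ∀ a b, 1 ≤ a → a ≤ b → b ≤ i - 1 → ks b ≤ ks a)
    (hpos : 0 < ℙ {ω | ∀ l, 1 ≤ l → l ≤ i - 1 → K l ω = ks l})
    (k : ℕ) :
    ℙ[|{ω | ∀ l, 1 ≤ l → l ≤ i - 1 → K l ω = ks l}] {ω | K i ω = k}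
      = ℙ[|{ω | K (i - 1) ω = ks (i - 1)}] {ω | K i ω = k} :=
  exceedance_counts_markov_general N U hmeas hindep hident M τs hτ K hK i hi2 hiM ks hpos k
end

section
/- Let U_1, ..., U_N be independent and identically distributed real-valued random variables, let τ_1 < τ_2 < ... < τ_M be increasing thresholds with π_i = P(U_1 > τ_i) satisfying π_i > 0 for i = 1,...,M−1, and let K_i = #{j ∈ {1,...,N} : U_j > τ_i}. Then for every nonincreasing sequence N ≥ k_1 ≥ k_2 ≥ ... ≥ k_M ≥ 0, the joint probability mass function factorizes as P(K_1 = k_1, ..., K_M = k_M) = [C(N,k_1) · π_1^{k_1} · (1−π_1)^{N−k_1}] · Π_{i=2}^{M} [C(k_{i−1},k_i) · (π_i/π_{i−1})^{k_i} · (1 − π_i/π_{i−1})^{k_{i−1}−k_i}]. -/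
open MeasureTheory ProbabilityTheory


noncomputable def CH (n M : ℕ) (A : Finset (Fin n)) (k : ℕ → ℕ) :
    Finset (Fin M → Finset (Fin n)) :=
  @Finset.filter _
    (fun V => (∀ i : Fin M, (V i).card = k i) ∧
      (∀ h : 0 < M, V ⟨0, h⟩ ⊆ A) ∧
      (∀ (i : ℕ) (h : i + 1 < M), V ⟨i+1, h⟩ ⊆ V ⟨i, Nat.lt_of_succ_lt h⟩))
    (Classical.decPred _) Finset.univ

lemma mem_CH {n M : ℕ} {A : Finset (Fin n)} {k : ℕ → ℕ} {V : Fin M → Finset (Fin n)} :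
    V ∈ CH n M A k ↔ (∀ i : Fin M, (V i).card = k i) ∧
      (∀ h : 0 < M, V ⟨0, h⟩ ⊆ A) ∧
      (∀ (i : ℕ) (h : i + 1 < M), V ⟨i+1, h⟩ ⊆ V ⟨i, Nat.lt_of_succ_lt h⟩) := by
  simp [CH]

theorem card_CH (n : ℕ) : ∀ (M : ℕ) (A : Finset (Fin n)) (k : ℕ → ℕ),
    (CH n M A k).card
      = ∏ i ∈ Finset.range M, (if i = 0 then A.card else k (i-1)).choose (k i) := by
  intro M
  induction M with
  | zero =>
    intro A k
    have : CH n 0 A k = Finset.univ := by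
      ext V; simp only [mem_CH, Finset.mem_univ, iff_true]
      refine ⟨fun i => i.elim0, fun h => absurd h (by omega), fun i h => absurd h (by omega)⟩
    rw [this]
    simp
  | succ M ih =>
    intro A k
    have key : CH n (M+1) A k
        = (A.powersetCard (k 0)).biUnion
            (fun S => ((CH n M S (fun i => k (i+1))).image (fun W => (Fin.cons S W : Fin (M+1) → Finset (Fin n))))) := by
      ext V
      simp only [Finset.mem_biUnion, Finset.mem_image, Finset.mem_powersetCard, mem_CH]
      constructor
      · rintro ⟨hcard, h0, hchain⟩
        refine ⟨V 0, ⟨h0 (Nat.succ_pos M), hcard 0⟩, Fin.tail V, ⟨?_, ?_, ?_⟩, Fin.cons_self_tail V⟩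
        · intro i; exact hcard i.succ
        · intro h
          have := hchain 0 (Nat.succ_lt_succ h)
          exact this
        · intro i h
          have := hchain (i+1) (Nat.succ_lt_succ h)
          convert this using 2 <;> rfl
      · rintro ⟨S, ⟨hSA, hScard⟩, W, ⟨hWcard, hW0, hWchain⟩, rfl⟩
        refine ⟨?_, ?_, ?_⟩
        · intro i
          rcases i with ⟨iv, hi⟩
          match iv, hi with
          | 0, hi => simpa using hScard
          | (j+1), hi =>
            have : (⟨j+1, hi⟩ : Fin (M+1)) = Fin.succ ⟨j, Nat.lt_of_succ_lt_succ hi⟩ := rfl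
            rw [this, Fin.cons_succ]
            exact hWcard _
        · intro h; simpa using hSA
        · intro i h
          match i, h with
          | 0, h =>
            have h1 : (⟨1, h⟩ : Fin (M+1)) = Fin.succ ⟨0, Nat.lt_of_succ_lt_succ h⟩ := rfl
            have h0eq : (⟨0, Nat.lt_of_succ_lt h⟩ : Fin (M+1)) = 0 := rfl
            rw [h1, h0eq, Fin.cons_succ, Fin.cons_zero]
            exact hW0 (Nat.lt_of_succ_lt_succ h)
          | (j+1), h =>
            have h1 : (⟨j+2, h⟩ : Fin (M+1)) = Fin.succ ⟨j+1, Nat.lt_of_succ_lt_succ h⟩ := rfl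
            have h2 : (⟨j+1, Nat.lt_of_succ_lt h⟩ : Fin (M+1))
                = Fin.succ ⟨j, by omega⟩ := rfl
            rw [h1, h2, Fin.cons_succ, Fin.cons_succ]
            exact hWchain j (Nat.lt_of_succ_lt_succ h)
    rw [key, Finset.card_biUnion]
    · have : ∀ S ∈ A.powersetCard (k 0),
          ((CH n M S (fun i => k (i+1))).image (fun W => (Fin.cons S W : Fin (M+1) → Finset (Fin n)))).card
            = ∏ i ∈ Finset.range M, (k i).choose (k (i+1)) := by
        intro S hS
        have hinj : Function.Injective
            (fun W : Fin M → Finset (Fin n) => (Fin.cons S W : Fin (M+1) → Finset (Fin n))) := by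
          intro W W' h
          funext i
          have := congrArg (fun f => f i.succ) h
          simpa using this
        rw [Finset.card_image_of_injective _ hinj, ih]
        rcases Finset.mem_powersetCard.1 hS with ⟨-, hcard⟩
        refine Finset.prod_congr rfl ?_
        intro i hi
        rcases Nat.eq_zero_or_pos i with h0 | hpos
        · subst h0; simp [hcard]
        · have : i ≠ 0 := Nat.pos_iff_ne_zero.mp hpos
          simp only [if_neg this]
          have h2 : i - 1 + 1 = i := by omega
          rw [h2]
      rw [Finset.sum_congr rfl this, Finset.sum_const, Finset.card_powersetCard,
        Finset.prod_range_succ' _ M]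
      simp [mul_comm]
    · intro S hS T hT hST
      apply Finset.disjoint_left.2
      rintro V hVS hVT
      rcases Finset.mem_image.1 hVS with ⟨W, -, rfl⟩
      rcases Finset.mem_image.1 hVT with ⟨W', -, hW'⟩
      apply hST
      have := congrArg (fun f => f 0) hW'
      simpa using this.symm


lemma tele_prod (f : ℕ → ℝ) (a : ℕ) : ∀ b, a ≤ b → (∀ i, a ≤ i → i < b → f i ≠ 0) →
    (∏ i ∈ Finset.Icc (a+1) b, (f i / f (i-1))) * f a = f b := by
  intro b hb
  induction b, hb using Nat.le_induction with
  | base =>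
    intro _
    rw [Finset.Icc_eq_empty (by omega)]
    simp
  | succ b hb ih =>
    intro hne
    rw [Finset.prod_Icc_succ_top (by omega)]
    have hfb : f b ≠ 0 := hne b hb (Nat.lt_succ_self b)
    rw [mul_right_comm, ih (fun i hi hib => hne i hi (by omega))]
    have : b + 1 - 1 = b := rfl
    rw [this, mul_comm, div_mul_cancel₀ _ hfb]

lemma final_algebra (N M : ℕ) (hM : 1 ≤ M) (πs : ℕ → ℝ) (ks : ℕ → ℕ)
    (hπ1le : πs 1 ≤ 1)
    (hπpos : ∀ i, 1 ≤ i → i ≤ M - 1 → 0 < πs i)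
    (hks1 : ks 1 ≤ N) (hksmono : ∀ a b, 1 ≤ a → a ≤ b → b ≤ M → ks b ≤ ks a)
    (q : ℕ → ℝ) (cc : ℕ → ℕ)
    (hq : ∀ m, q m = if m = 0 then 1 - πs 1 else if m = M then πs M else πs m - πs (m+1))
    (hcc : ∀ m, cc m = if m = 0 then N else if m ≤ M then ks m else 0) :
    (∏ i ∈ Finset.range M, ((if i = 0 then N else ks i).choose (ks (i+1)) : ℝ))
      * ∏ m ∈ Finset.range (M+1), q m ^ (cc m - cc (m+1))
      = (N.choose (ks 1) : ℝ) * πs 1 ^ ks 1 * (1 - πs 1) ^ (N - ks 1)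
          * ∏ i ∈ Finset.Icc 2 M, (((ks (i-1)).choose (ks i) : ℝ)
              * (πs i / πs (i-1)) ^ ks i
              * (1 - πs i / πs (i-1)) ^ (ks (i-1) - ks i)) := by
  obtain ⟨M', rfl⟩ : ∃ M', M = M' + 1 := ⟨M - 1, by omega⟩
  -- choose part
  have hchoose : (∏ i ∈ Finset.range (M'+1), ((if i = 0 then N else ks i).choose (ks (i+1)) : ℝ))
      = (N.choose (ks 1) : ℝ) * ∏ i ∈ Finset.Icc 2 (M'+1), ((ks (i-1)).choose (ks i) : ℝ) := by
    rw [Finset.prod_range_succ' _ M']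
    have h1 : Finset.Icc 2 (M'+1) = Finset.Ico 2 (M'+2) := by
      exact (Finset.Ico_add_one_right_eq_Icc ..).symm
    rw [h1, Finset.prod_Ico_eq_prod_range]
    simp only [Nat.add_sub_cancel]
    have h2 : ∀ i, ((if i + 1 = 0 then N else ks (i+1)).choose (ks (i+2)) : ℝ)
        = ((ks (2+i-1)).choose (ks (2+i)) : ℝ) := by
      intro i
      have : 2 + i - 1 = i + 1 := by omega
      rw [this, if_neg (Nat.succ_ne_zero i)]
      have h3 : 2 + i = i + 2 := by omega
      rw [h3]
    rw [Finset.prod_congr rfl (fun i _ => h2 i)]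
    simp [mul_comm]
  -- q part
  have hqpart : (∏ m ∈ Finset.range (M'+2), q m ^ (cc m - cc (m+1)))
      = πs 1 ^ ks 1 * (1 - πs 1) ^ (N - ks 1)
          * ∏ i ∈ Finset.Icc 2 (M'+1), ((πs i / πs (i-1)) ^ ks i
              * (1 - πs i / πs (i-1)) ^ (ks (i-1) - ks i)) := by
    set g : ℕ → ℝ := fun i => πs i ^ ks i with hg
    -- rewrite each factor of the RHS product
    have hfac : ∀ i, 2 ≤ i → i ≤ M' + 1 →
        (πs i / πs (i-1)) ^ ks i * (1 - πs i / πs (i-1)) ^ (ks (i-1) - ks i)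
          = (g i / g (i-1)) * (πs (i-1) - πs i) ^ (ks (i-1) - ks i) := by
      intro i h2 hle
      have hpos : 0 < πs (i-1) := hπpos (i-1) (by omega) (by omega)
      have hne : πs (i-1) ≠ 0 := ne_of_gt hpos
      have hk : ks i + (ks (i-1) - ks i) = ks (i-1) := by
        have := hksmono (i-1) i (by omega) (by omega) (by omega)
        omega
      rw [one_sub_div hne, div_pow, div_pow, hg]
      simp only []
      rw [← hk, pow_add]
      field_simp
      rw [Nat.add_sub_cancel_left]
    have hrw : ∏ i ∈ Finset.Icc 2 (M'+1), ((πs i / πs (i-1)) ^ ks i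
          * (1 - πs i / πs (i-1)) ^ (ks (i-1) - ks i))
        = (∏ i ∈ Finset.Icc 2 (M'+1), (g i / g (i-1)))
          * ∏ i ∈ Finset.Icc 2 (M'+1), (πs (i-1) - πs i) ^ (ks (i-1) - ks i) := by
      rw [← Finset.prod_mul_distrib]
      exact Finset.prod_congr rfl (fun i hi => by
        rcases Finset.mem_Icc.1 hi with ⟨h2, hle⟩
        exact hfac i h2 hle)
    have htele : (∏ i ∈ Finset.Icc 2 (M'+1), (g i / g (i-1))) * g 1 = g (M'+1) := by
      have := tele_prod g 1 (M'+1) (by omega)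
        (fun i hi hilt => pow_ne_zero _ (ne_of_gt (hπpos i hi (by omega))))
      simpa using this
    -- compute the LHS
    rw [Finset.prod_range_succ' _ (M'+1), Finset.prod_range_succ]
    have hf0 : q 0 ^ (cc 0 - cc 1) = (1 - πs 1) ^ (N - ks 1) := by
      rw [hq, hcc, hcc]
      simp [hM]
    have hftop : q (M'+1) ^ (cc (M'+1) - cc (M'+2)) = πs (M'+1) ^ ks (M'+1) := by
      rw [hq, hcc, hcc]
      have h1 : ¬ (M'+2 ≤ M'+1) := by omega
      simp [h1]
    have hfm : ∀ m, m < M' → q (m+1) ^ (cc (m+1) - cc (m+2))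
        = (πs (m+1) - πs (m+2)) ^ (ks (m+1) - ks (m+2)) := by
      intro m hm
      rw [hq, hcc, hcc]
      have h1 : m + 1 ≠ 0 := by omega
      have h2 : m + 1 ≠ M' + 1 := by omega
      have h3 : m + 1 ≤ M' + 1 := by omega
      have h4 : m + 2 ≤ M' + 1 := by omega
      simp [h1, h2, h3, h4]
      intro h; omega
    rw [Finset.prod_congr rfl (fun m hm => hfm m (Finset.mem_range.1 hm)), hf0, hftop]
    -- compute the RHS
    rw [hrw]
    have hD : ∏ i ∈ Finset.Icc 2 (M'+1), (πs (i-1) - πs i) ^ (ks (i-1) - ks i)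
        = ∏ m ∈ Finset.range M', (πs (m+1) - πs (m+2)) ^ (ks (m+1) - ks (m+2)) := by
      rw [show Finset.Icc 2 (M'+1) = Finset.Ico 2 (M'+2) from (Finset.Ico_add_one_right_eq_Icc ..).symm,
        Finset.prod_Ico_eq_prod_range]
      simp only [Nat.add_sub_cancel]
      refine Finset.prod_congr rfl (fun m _ => ?_)
      have e1 : 2 + m - 1 = m + 1 := by omega
      have e2 : 2 + m = m + 2 := by omega
      rw [e1, e2]
    rw [hD]
    have hg1 : πs 1 ^ ks 1 = g 1 := rfl
    calc (∏ m ∈ Finset.range M', (πs (m+1) - πs (m+2)) ^ (ks (m+1) - ks (m+2)))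
          * πs (M'+1) ^ ks (M'+1) * (1 - πs 1) ^ (N - ks 1)
        = (∏ m ∈ Finset.range M', (πs (m+1) - πs (m+2)) ^ (ks (m+1) - ks (m+2)))
          * g (M'+1) * (1 - πs 1) ^ (N - ks 1) := rfl
      _ = (∏ m ∈ Finset.range M', (πs (m+1) - πs (m+2)) ^ (ks (m+1) - ks (m+2)))
          * ((∏ i ∈ Finset.Icc 2 (M'+1), (g i / g (i-1))) * g 1) * (1 - πs 1) ^ (N - ks 1) := by
          rw [htele]
      _ = _ := by rw [hg1]; ring
  calc (∏ i ∈ Finset.range (M'+1), ((if i = 0 then N else ks i).choose (ks (i+1)) : ℝ))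
      * ∏ m ∈ Finset.range (M'+1+1), q m ^ (cc m - cc (m+1))
      = ((N.choose (ks 1) : ℝ) * ∏ i ∈ Finset.Icc 2 (M'+1), ((ks (i-1)).choose (ks i) : ℝ))
        * (πs 1 ^ ks 1 * (1 - πs 1) ^ (N - ks 1)
          * ∏ i ∈ Finset.Icc 2 (M'+1), ((πs i / πs (i-1)) ^ ks i
              * (1 - πs i / πs (i-1)) ^ (ks (i-1) - ks i))) := by rw [hchoose, hqpart]
    _ = _ := by
        have hsplit : ∏ i ∈ Finset.Icc 2 (M'+1), (((ks (i-1)).choose (ks i) : ℝ)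
              * (πs i / πs (i-1)) ^ ks i
              * (1 - πs i / πs (i-1)) ^ (ks (i-1) - ks i))
            = (∏ i ∈ Finset.Icc 2 (M'+1), ((ks (i-1)).choose (ks i) : ℝ))
              * ∏ i ∈ Finset.Icc 2 (M'+1), ((πs i / πs (i-1)) ^ ks i
                  * (1 - πs i / πs (i-1)) ^ (ks (i-1) - ks i)) := by
          rw [← Finset.prod_mul_distrib]
          exact Finset.prod_congr rfl (fun i _ => by ring)
        rw [hsplit]
        ring


lemma lowerset_mem {M : ℕ} (S : Finset (Fin M))
    (hS : ∀ i j : Fin M, i ≤ j → j ∈ S → i ∈ S) (i : Fin M) :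
    i ∈ S ↔ (i : ℕ) < S.card := by
  constructor
  · intro hi
    have hsub : Finset.Iic i ⊆ S := fun j hj => hS j i (Finset.mem_Iic.1 hj) hi
    have := Finset.card_le_card hsub
    rw [Fin.card_Iic] at this
    omega
  · intro hi
    by_contra hmem
    have hsub : S ⊆ Finset.Iio i := by
      intro j hj
      rw [Finset.mem_Iio]
      by_contra hji
      exact hmem (hS i j (le_of_not_gt hji) hj)
    have := Finset.card_le_card hsub
    rw [Fin.card_Iio] at this
    omega

section Main

variable {Ω : Type*} [MeasureSpace Ω] [IsProbabilityMeasure (ℙ : Measure Ω)]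
    {N : ℕ} {U : Fin N → Ω → ℝ} {M : ℕ} {τs : ℕ → ℝ} {πs : ℕ → ℝ} {ks : ℕ → ℕ}

/-- the canonical interval set for level `m` -/
def Texc (τs : ℕ → ℝ) (M m : ℕ) : Set ℝ :=
  {x | ∀ i : Fin M, (τs ((i:ℕ)+1) < x ↔ (i:ℕ) < m)}

theorem main_thm
    (hmeas : ∀ j, Measurable (U j))
    (hindep : iIndepFun U ℙ)
    (hM : 1 ≤ M)
    (hτ : ∀ i, 1 ≤ i → i < M → τs i < τs (i + 1))
    (hπ01 : ∀ i, 0 ≤ πs i ∧ πs i ≤ 1)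
    (hπ : ∀ i j, ℙ {ω | τs i < U j ω} = ENNReal.ofReal (πs i))
    (hπpos : ∀ i, 1 ≤ i → i ≤ M - 1 → 0 < πs i)
    (hks1 : ks 1 ≤ N)
    (hksmono : ∀ a b, 1 ≤ a → a ≤ b → b ≤ M → ks b ≤ ks a) :
    ℙ {ω | ∀ i, 1 ≤ i → i ≤ M →
        (Finset.univ.filter (fun j => τs i < U j ω)).card = ks i}
      = ENNReal.ofReal
          (((N.choose (ks 1) : ℝ) * πs 1 ^ ks 1 * (1 - πs 1) ^ (N - ks 1))
            * ∏ i ∈ Finset.Icc 2 M,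
                ((ks (i - 1)).choose (ks i) : ℝ) * (πs i / πs (i - 1)) ^ ks i
                  * (1 - πs i / πs (i - 1)) ^ (ks (i - 1) - ks i)) := by
  classical
  -- monotonicity of thresholds
  have hτmono : ∀ a b, 1 ≤ a → a ≤ b → b ≤ M → τs a ≤ τs b := by
    intro a b ha hab
    induction b, hab using Nat.le_induction with
    | base => intro _; exact le_rfl
    | succ b hb ih =>
      intro hbM
      exact le_trans (ih (by omega)) (le_of_lt (hτ b (by omega) (by omega)))
  set q : ℕ → ℝ := fun m =>
    if m = 0 then 1 - πs 1 else if m = M then πs M else πs m - πs (m+1) with hqdef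
  set cc : ℕ → ℕ := fun m => if m = 0 then N else if m ≤ M then ks m else 0 with hccdef
  set 𝒞 : Finset (Fin M → Finset (Fin N)) := CH N M Finset.univ (fun i => ks (i+1)) with h𝒞def
  set B : (Fin M → Finset (Fin N)) → Set Ω := fun V =>
    {ω | ∀ i : Fin M, Finset.univ.filter (fun j => τs ((i:ℕ)+1) < U j ω) = V i} with hBdef
  set lev : (Fin M → Finset (Fin N)) → Fin N → ℕ := fun V j =>
    (Finset.univ.filter (fun i : Fin M => j ∈ V i)).card with hlevdef
  -- descending chains
  have hdesc : ∀ V ∈ 𝒞, ∀ (i i' : Fin M), i ≤ i' → V i' ⊆ V i := by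
    intro V hV i i' hii'
    obtain ⟨-, -, hchain⟩ := mem_CH.1 hV
    have key : ∀ d (i : Fin M) (h : (i:ℕ) + d < M), V ⟨(i:ℕ) + d, h⟩ ⊆ V i := by
      intro d
      induction d with
      | zero => intro i h; simp
      | succ d ih =>
        intro i h
        have h1 : (⟨(i:ℕ) + (d+1), h⟩ : Fin M) = ⟨((i:ℕ) + d) + 1, by omega⟩ := rfl
        rw [h1]
        exact subset_trans (hchain ((i:ℕ)+d) (by omega)) (ih i (by omega))
    have hj : (i':ℕ) = (i:ℕ) + ((i':ℕ) - (i:ℕ)) := by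
      have := (Fin.le_def).1 hii'; omega
    have h2 : i' = ⟨(i:ℕ) + ((i':ℕ) - (i:ℕ)), by omega⟩ := by
      apply Fin.ext; simpa using hj
    rw [h2]
    exact key _ i _
  -- levels characterize membership
  have hlev : ∀ V ∈ 𝒞, ∀ (j : Fin N) (i : Fin M), j ∈ V i ↔ (i:ℕ) < lev V j := by
    intro V hV j i
    have := lowerset_mem (Finset.univ.filter (fun i : Fin M => j ∈ V i))
      (fun a b hab hb => by
        simp only [Finset.mem_filter, Finset.mem_univ, true_and] at *
        exact hdesc V hV a b hab hb) i
    simpa using this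
  have hlevle : ∀ V j, lev V j ≤ M := by
    intro V j
    simp only [hlevdef]
    calc (Finset.univ.filter (fun i : Fin M => j ∈ V i)).card
        ≤ (Finset.univ : Finset (Fin M)).card := Finset.card_filter_le _ _
      _ = M := by simp
  -- measurability of the level sets
  have hTmeas : ∀ m, MeasurableSet (Texc τs M m) := by
    intro m
    have h1 : Texc τs M m = ⋂ i : Fin M, {x : ℝ | τs ((i:ℕ)+1) < x ↔ (i:ℕ) < m} := by
      ext x; simp [Texc, Set.mem_iInter]
    rw [h1]
    refine MeasurableSet.iInter (fun i => ?_)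
    by_cases hi : (i:ℕ) < m
    · simp only [hi, iff_true]
      exact measurableSet_Ioi
    · simp only [hi, iff_false]
      exact (measurableSet_Ioi (a := τs ((i:ℕ)+1))).compl
  -- single-coordinate probabilities
  have hq1 : ∀ (j : Fin N) (m : ℕ), m ≤ M →
      ℙ (U j ⁻¹' Texc τs M m) = ENNReal.ofReal (q m) := by
    intro j m hm
    rcases Nat.eq_zero_or_pos m with rfl | hmpos
    · have hset : Texc τs M 0 = {x : ℝ | τs 1 < x}ᶜ := by
        ext x
        simp only [Texc, Set.mem_setOf_eq, Set.mem_compl_iff, Nat.not_lt_zero, iff_false]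
        constructor
        · intro h hx
          exact h ⟨0, hM⟩ hx
        · intro hx i hxi
          exact hx (lt_of_le_of_lt (hτmono 1 ((i:ℕ)+1) le_rfl (by omega) (by omega)) hxi)
      rw [hset, Set.preimage_compl,
        prob_compl_eq_one_sub
          (show MeasurableSet (U j ⁻¹' {x : ℝ | τs 1 < x}) from hmeas j measurableSet_Ioi)]
      have hpre : U j ⁻¹' {x | τs 1 < x} = {ω | τs 1 < U j ω} := rfl
      rw [hpre, hπ 1 j]
      have hq0 : q 0 = 1 - πs 1 := by simp [hqdef]
      rw [hq0, ENNReal.ofReal_sub _ (hπ01 1).1, ENNReal.ofReal_one]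
    rcases eq_or_lt_of_le hm with heq | hmlt
    · -- m = M
      rw [heq]
      have hset : Texc τs M M = {x : ℝ | τs M < x} := by
        ext x
        simp only [Texc, Set.mem_setOf_eq]
        constructor
        · intro h
          have := (h ⟨M-1, by omega⟩).2 (by simp; omega)
          simpa [Nat.sub_add_cancel hM] using this
        · intro hx i
          simp only [i.isLt, iff_true]
          exact lt_of_le_of_lt (hτmono ((i:ℕ)+1) M (by omega) (by omega) le_rfl) hx
      rw [hset]
      have hpre : U j ⁻¹' {x | τs M < x} = {ω | τs M < U j ω} := rfl
      rw [hpre, hπ M j]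
      have : q M = πs M := by simp [hqdef]; intro h; omega
      rw [this]
    · -- 1 ≤ m < M
      have hset : Texc τs M m = {x : ℝ | τs m < x} \ {x : ℝ | τs (m+1) < x} := by
        ext x
        simp only [Texc, Set.mem_setOf_eq, Set.mem_diff]
        constructor
        · intro h
          constructor
          · have := (h ⟨m-1, by omega⟩).2 (by simp; omega)
            simpa [Nat.sub_add_cancel hmpos] using this
          · intro hx
            have := (h ⟨m, hmlt⟩).1 hx
            simp at this
        · rintro ⟨hx1, hx2⟩ i
          constructor
          · intro hτi
            by_contra him
            exact hx2 (lt_of_le_of_lt (hτmono (m+1) ((i:ℕ)+1) (by omega) (by omega) (by omega)) hτi)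
          · intro him
            exact lt_of_le_of_lt (hτmono ((i:ℕ)+1) m (by omega) (by omega) (by omega)) hx1
      rw [hset, Set.preimage_diff]
      have hsub : U j ⁻¹' {x : ℝ | τs (m+1) < x} ⊆ U j ⁻¹' {x : ℝ | τs m < x} := by
        intro ω hω
        exact lt_trans (hτ m hmpos hmlt) hω
      rw [measure_diff hsub
        (show MeasurableSet (U j ⁻¹' {x : ℝ | τs (m+1) < x}) from
          hmeas j measurableSet_Ioi).nullMeasurableSet (measure_ne_top _ _)]
      have hpre1 : U j ⁻¹' {x | τs m < x} = {ω | τs m < U j ω} := rfl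
      have hpre2 : U j ⁻¹' {x | τs (m+1) < x} = {ω | τs (m+1) < U j ω} := rfl
      rw [hpre1, hpre2, hπ m j, hπ (m+1) j]
      have : q m = πs m - πs (m+1) := by
        simp only [hqdef]
        rw [if_neg (by omega), if_neg (by omega)]
      rw [this, ENNReal.ofReal_sub _ (hπ01 (m+1)).1]
  -- nonnegativity of q (needs some coordinate)
  have hqnn : ∀ (_ : Fin N) (m : ℕ), m ≤ M → 0 ≤ q m := by
    intro j m hm
    rcases Nat.eq_zero_or_pos m with rfl | hmpos
    · simp only [hqdef]; simp
      exact (hπ01 1).2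
    rcases eq_or_lt_of_le hm with heq | hmlt
    · rw [heq]
      have : q M = πs M := by simp [hqdef]; intro h; omega
      rw [this]; exact (hπ01 M).1
    · have hle : πs (m+1) ≤ πs m := by
        have hsub : {ω | τs (m+1) < U j ω} ⊆ {ω | τs m < U j ω} := by
          intro ω hω
          exact lt_trans (hτ m hmpos hmlt) hω
        have := measure_mono (μ := (ℙ : Measure Ω)) hsub
        rw [hπ (m+1) j, hπ m j] at this
        exact (ENNReal.ofReal_le_ofReal_iff (hπ01 m).1).1 this
      have : q m = πs m - πs (m+1) := by
        simp only [hqdef]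
        rw [if_neg (by omega), if_neg (by omega)]
      rw [this]
      linarith
  -- membership description of B
  have hBiff : ∀ (V : Fin M → Finset (Fin N)) (ω : Ω),
      ω ∈ B V ↔ ∀ (i : Fin M) (j : Fin N), (τs ((i:ℕ)+1) < U j ω ↔ j ∈ V i) := by
    intro V ω
    simp only [hBdef, Set.mem_setOf_eq]
    constructor
    · intro h i j
      rw [← h i]
      simp
    · intro h i
      ext j
      simp [h i j]
  have hBmeas : ∀ (V : Fin M → Finset (Fin N)), MeasurableSet (B V) := by
    intro V
    have hB2 : B V = ⋂ (i : Fin M) (j : Fin N), {ω | τs ((i:ℕ)+1) < U j ω ↔ j ∈ V i} := by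
      ext ω
      simp only [Set.mem_iInter, Set.mem_setOf_eq]
      exact hBiff V ω
    rw [hB2]
    refine MeasurableSet.iInter fun i => MeasurableSet.iInter fun j => ?_
    by_cases hj : j ∈ V i
    · simp only [hj, iff_true]
      exact hmeas j measurableSet_Ioi
    · simp only [hj, iff_false]
      exact (show MeasurableSet {ω | τs ((i:ℕ)+1) < U j ω} from hmeas j measurableSet_Ioi).compl
  -- decomposition of the event
  have hEdecomp : {ω | ∀ i, 1 ≤ i → i ≤ M →
        (Finset.univ.filter (fun j => τs i < U j ω)).card = ks i}
      = ⋃ V ∈ 𝒞, B V := by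
    ext ω
    simp only [Set.mem_setOf_eq, Set.mem_iUnion, exists_prop]
    constructor
    · intro hω
      refine ⟨fun i => Finset.univ.filter (fun j => τs ((i:ℕ)+1) < U j ω), ?_, fun i => rfl⟩
      rw [h𝒞def, mem_CH]
      refine ⟨?_, ?_, ?_⟩
      · intro i
        exact hω ((i:ℕ)+1) (by omega) (by omega)
      · intro h
        exact Finset.subset_univ _
      · intro i h j hj
        simp only [Finset.mem_filter, Finset.mem_univ, true_and] at *
        exact lt_trans (hτ ((i:ℕ)+1) (by omega) (by omega)) hj
    · rintro ⟨V, hV, hB⟩ i h1 hiM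
      have hic : i - 1 < M := by omega
      have hB' : ∀ i : Fin M, Finset.univ.filter (fun j => τs ((i:ℕ)+1) < U j ω) = V i := hB
      obtain ⟨hcards, -, -⟩ := mem_CH.1 (h𝒞def ▸ hV)
      have key : ((⟨i-1, hic⟩ : Fin M) : ℕ) + 1 = i := by simp; omega
      rw [← key, hB' ⟨i-1, hic⟩]
      exact hcards ⟨i-1, hic⟩
  -- disjointness
  have hBdisj : (↑𝒞 : Set (Fin M → Finset (Fin N))).PairwiseDisjoint B := by
    intro V hV V' hV' hVV'
    refine Set.disjoint_left.2 ?_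
    intro ω hω hω'
    apply hVV'
    funext i
    have h1 : ∀ i : Fin M, Finset.univ.filter (fun j => τs ((i:ℕ)+1) < U j ω) = V i := hω
    have h2 : ∀ i : Fin M, Finset.univ.filter (fun j => τs ((i:ℕ)+1) < U j ω) = V' i := hω'
    rw [← h1 i, h2 i]
  -- per-chain measure
  have hBmeasure : ∀ V ∈ 𝒞, ℙ (B V)
      = ENNReal.ofReal (∏ m ∈ Finset.range (M+1), q m ^ (cc m - cc (m+1))) := by
    intro V hV
    have hBinter : B V = ⋂ j ∈ (Finset.univ : Finset (Fin N)), U j ⁻¹' Texc τs M (lev V j) := by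
      ext ω
      simp only [Set.mem_iInter, Set.mem_preimage, Finset.mem_univ, true_implies]
      rw [hBiff V ω]
      constructor
      · intro h j i
        exact ((h i j).trans (hlev V hV j i))
      · intro h i j
        exact (h j i).trans (hlev V hV j i).symm
    rw [hBinter, hindep.measure_inter_preimage_eq_mul (S := Finset.univ)
      (sets := fun j => Texc τs M (lev V j)) (fun j _ => hTmeas (lev V j))]
    have hprod : ∀ j ∈ (Finset.univ : Finset (Fin N)),
        ℙ (U j ⁻¹' Texc τs M (lev V j)) = ENNReal.ofReal (q (lev V j)) :=
      fun j _ => hq1 j (lev V j) (hlevle V j)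
    rw [Finset.prod_congr rfl hprod, ← ENNReal.ofReal_prod_of_nonneg
      (fun j _ => hqnn j (lev V j) (hlevle V j))]
    congr 1
    have hmaps : ∀ j ∈ (Finset.univ : Finset (Fin N)), lev V j ∈ Finset.range (M+1) :=
      fun j _ => Finset.mem_range.2 (by have := hlevle V j; omega)
    rw [← Finset.prod_fiberwise_of_maps_to hmaps (fun j => q (lev V j))]
    refine Finset.prod_congr rfl ?_
    intro m hm
    have hfilter : ∏ j ∈ Finset.univ.filter (fun j => lev V j = m), q (lev V j)
        = q m ^ (Finset.univ.filter (fun j => lev V j = m)).card := by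
      rw [Finset.prod_congr rfl (fun j hj => by rw [(Finset.mem_filter.1 hj).2]),
        Finset.prod_const]
    rw [hfilter]
    congr 1
    -- fiber cardinality
    have hGe : ∀ m', (h1 : 1 ≤ m') → (h2 : m' ≤ M) →
        Finset.univ.filter (fun j => m' ≤ lev V j) = V ⟨m'-1, by omega⟩ := by
      intro m' h1 h2
      ext j
      simp only [Finset.mem_filter, Finset.mem_univ, true_and]
      rw [hlev V hV j ⟨m'-1, by omega⟩]
      have hco : ((⟨m'-1, by omega⟩ : Fin M) : ℕ) = m' - 1 := rfl
      rw [hco]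
      omega
    have hGecard : ∀ m', m' ≤ M + 1 → (Finset.univ.filter (fun j => m' ≤ lev V j)).card = cc m' := by
      intro m' hm'
      rcases Nat.eq_zero_or_pos m' with rfl | h1
      · simp only [hccdef]
        simp
      rcases eq_or_lt_of_le hm' with heq | hlt
      · rw [heq]
        have hempty : Finset.univ.filter (fun j => M + 1 ≤ lev V j) = ∅ := by
          ext j
          simp only [Finset.mem_filter, Finset.mem_univ, true_and, Finset.notMem_empty,
            iff_false]
          have := hlevle V j
          omega
        rw [hempty]
        simp only [hccdef]
        rw [if_neg (by omega), if_neg (by omega)]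
        simp
      · have h2 : m' ≤ M := by omega
        rw [hGe m' h1 h2]
        obtain ⟨hcards, -, -⟩ := mem_CH.1 (h𝒞def ▸ hV)
        rw [hcards ⟨m'-1, by omega⟩]
        simp only [hccdef]
        rw [if_neg (by omega), if_pos h2]
        have hco : ((⟨m'-1, by omega⟩ : Fin M) : ℕ) + 1 = m' := by
          have : ((⟨m'-1, by omega⟩ : Fin M) : ℕ) = m' - 1 := rfl
          omega
        rw [hco]
    have hsplit : Finset.univ.filter (fun j => lev V j = m)
        = Finset.univ.filter (fun j => m ≤ lev V j)
          \ Finset.univ.filter (fun j => m+1 ≤ lev V j) := by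
      ext j
      simp only [Finset.mem_filter, Finset.mem_sdiff, Finset.mem_univ, true_and]
      omega
    have hmM : m ≤ M := Nat.lt_succ_iff.1 (Finset.mem_range.1 hm)
    rw [hsplit, Finset.card_sdiff_of_subset (by
      intro j hj
      simp only [Finset.mem_filter, Finset.mem_univ, true_and] at *
      omega)]
    rw [hGecard m (by omega), hGecard (m+1) (by omega)]
  -- assembly
  rw [hEdecomp, measure_biUnion_finset hBdisj (fun V _ => hBmeas V),
    Finset.sum_congr rfl hBmeasure, Finset.sum_const, nsmul_eq_mul,
    ← ENNReal.ofReal_natCast, ← ENNReal.ofReal_mul (Nat.cast_nonneg _)]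
  congr 1
  have hcard : ((𝒞.card : ℕ) : ℝ)
      = ∏ i ∈ Finset.range M, ((if i = 0 then N else ks i).choose (ks (i+1)) : ℝ) := by
    rw [h𝒞def, card_CH]
    rw [Nat.cast_prod]
    refine Finset.prod_congr rfl ?_
    intro i hi
    rcases Nat.eq_zero_or_pos i with rfl | h1
    · simp
    · rw [if_neg (by omega), if_neg (by omega)]
      have : i - 1 + 1 = i := by omega
      rw [this]
  rw [hcard]
  exact final_algebra N M hM πs ks (hπ01 1).2 hπpos hks1 hksmono q cc
    (fun m => rfl) (fun m => rfl)

end Main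

/-- For iid real-valued random variables `U_1, ..., U_N` and increasing thresholds
`τ_1 < ... < τ_M` with exceedance probabilities `π_i = P(U_j > τ_i)` (positive for
`i ≤ M-1`), the joint probability mass function of the exceedance counts
`K_i = #{j : U_j > τ_i}` at a nonincreasing sequence `N ≥ k_1 ≥ ... ≥ k_M ≥ 0`
factorizes into a binomial marginal times binomial transition kernels. -/
theorem exceedance_counts_joint_pmf
    {Ω : Type*} [MeasureSpace Ω] [IsProbabilityMeasure (ℙ : Measure Ω)]
    (N : ℕ) (U : Fin N → Ω → ℝ) (hmeas : ∀ j, Measurable (U j))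
    (hindep : iIndepFun U ℙ)
    (hident : ∀ i j, Measure.map (U i) ℙ = Measure.map (U j) ℙ)
    (M : ℕ) (hM : 1 ≤ M)
    (τs : ℕ → ℝ) (hτ : ∀ i, 1 ≤ i → i < M → τs i < τs (i + 1))
    (πs : ℕ → ℝ) (hπ01 : ∀ i, 0 ≤ πs i ∧ πs i ≤ 1)
    (hπ : ∀ i j, ℙ {ω | τs i < U j ω} = ENNReal.ofReal (πs i))
    (hπpos : ∀ i, 1 ≤ i → i ≤ M - 1 → 0 < πs i)
    (ks : ℕ → ℕ) (hks1 : ks 1 ≤ N)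
    (hksmono : ∀ a b, 1 ≤ a → a ≤ b → b ≤ M → ks b ≤ ks a) :
    ℙ {ω | ∀ i, 1 ≤ i → i ≤ M →
        (Finset.univ.filter (fun j => τs i < U j ω)).card = ks i}
      = ENNReal.ofReal
          (((N.choose (ks 1) : ℝ) * πs 1 ^ ks 1 * (1 - πs 1) ^ (N - ks 1))
            * ∏ i ∈ Finset.Icc 2 M,
                ((ks (i - 1)).choose (ks i) : ℝ) * (πs i / πs (i - 1)) ^ ks i
                  * (1 - πs i / πs (i - 1)) ^ (ks (i - 1) - ks i)) :=
  main_thm hmeas hindep hM hτ hπ01 hπ hπpos hks1 hksmono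
end
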